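/- arXiv:2407.09664 — 2 statements merged into one kernel-verified Lean document; each statement's English description precedes it below -/
import Mathlib

section
/- Bernstein–Serfling inequality (sub-exponential norm of a without-replacement sample mean): let z_1,…,z_N be fixed points, n ∈ {1,…,N}, and f a real-valued function on the population that is not constant on {z_1,…,z_N}. Set C = (24√2 / n) · max_{i∈[N]} |f(z_i) − P_N f| + sqrt( 72 / (n·log 2) ) · ‖f − P_N f‖_{L²(P_N)}. Then for a uniform random permutation π of [N], E[ exp( |𝔓_{π,n} f − P_N f| / C ) ] ≤ 2; equivalently, the Orlicz ψ₁-norm of (𝔓_{π,n} − P_N)f is at most C. -/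
/-!
Write `a i = f (z i) - P_N f`, so that `𝔓_{π,n} f - P_N f = n⁻¹ ∑_{i ∈ sample} a i`.
Averaged over `π`, a product `∏_{i ∈ sample} c i` equals `e_n(c) / C(N, n)`, which by Maclaurin's
inequality is at most `(N⁻¹ ∑ c i) ^ n`. With `c i = exp (± a i / (C n))`, the bound
`exp x ≤ 1 + x + x²` on `[-1, 1]` turns this into `E exp (± (𝔓_{π,n} f - P_N f) / C) ≤ 5 / 4`.
Hence `E exp (|·| / C) + E exp (-|·| / C) ≤ 5 / 2`; the product of these two means is at least
`1` by Cauchy–Schwarz and the first one is at least `1`, which forces it to be at most `2`.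
-/

open Finset

/-- The finite-population mean `P_N f = N⁻¹ Σ_{i=1}^N f(z_i)`. -/
noncomputable def PN {𝒵 : Type*} (N : ℕ) (z : Fin N → 𝒵) (f : 𝒵 → ℝ) : ℝ :=
  (∑ i, f (z i)) / (N : ℝ)

/-- The without-replacement sample mean `𝔓_{π,n} f = n⁻¹ Σ_{i : π(i) ≤ n} f(z_i)`. -/
noncomputable def sampleMean {𝒵 : Type*} (N n : ℕ) (z : Fin N → 𝒵) (f : 𝒵 → ℝ)
    (π : Equiv.Perm (Fin N)) : ℝ :=
  (∑ i, if (π i : ℕ) < n then f (z i) else 0) / (n : ℝ)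

/-- `‖f − P_N f‖_{L²(P_N)} = sqrt( N⁻¹ Σ_i (f(z_i) − P_N f)² )`. -/
noncomputable def L2PN {𝒵 : Type*} (N : ℕ) (z : Fin N → 𝒵) (f : 𝒵 → ℝ) : ℝ :=
  Real.sqrt ((∑ i, (f (z i) - PN N z f) ^ 2) / (N : ℝ))

open Equiv

theorem Multiset.esymm_cons_succ {R : Type*} [CommSemiring R] (a : R) (s : Multiset R) (k : ℕ) :
    (a ::ₘ s).esymm (k + 1) = s.esymm (k + 1) + a * s.esymm k := by
  simp [esymm, powersetCard_cons, map_map, sum_map_mul_left]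

namespace Finset

variable {ι R : Type*} [DecidableEq ι]

/-- `t.esymm c k` is `(t.val.map c).esymm k` (see `Finset.esymm_map_val`). -/
def esymm [CommSemiring R] (t : Finset ι) (c : ι → R) (k : ℕ) : R :=
  ∑ S ∈ t.powersetCard k, ∏ i ∈ S, c i

section CommSemiring

variable [CommSemiring R] {t : Finset ι} {c : ι → R}

theorem esymm_insert_succ {x : ι} (hx : x ∉ t) (k : ℕ) :
    (insert x t).esymm c (k + 1) = t.esymm c (k + 1) + c x * t.esymm c k := by
  simp only [esymm, ← Finset.esymm_map_val, insert_val_of_notMem hx, Multiset.map_cons,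
    Multiset.esymm_cons_succ]

theorem sum_esymm_erase (k : ℕ) :
    ∑ i ∈ t, (t.erase i).esymm c k = (#t - k) • t.esymm c k := by
  have hfilter : ∀ i, (t.erase i).powersetCard k = (t.powersetCard k).filter (i ∉ ·) := by
    intro i
    ext S
    simp only [mem_powersetCard, mem_filter, subset_erase]
    tauto
  simp_rw [esymm, hfilter, sum_filter, smul_sum]
  rw [sum_comm]
  refine sum_congr rfl fun S hS => ?_
  rw [mem_powersetCard] at hS
  rw [sum_ite, sum_const_zero, add_zero, sum_const, filter_notMem_eq_sdiff,
    card_sdiff_of_subset hS.1, hS.2]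

theorem sum_mul_esymm_erase (k : ℕ) :
    ∑ i ∈ t, c i * (t.erase i).esymm c k = (k + 1) • t.esymm c (k + 1) := by
  simp_rw [esymm, mul_sum, smul_sum]
  have hcard : ∀ T ∈ t.powersetCard (k + 1), (k + 1) • ∏ j ∈ T, c j = ∑ _i ∈ T, ∏ j ∈ T, c j := by
    intro T hT
    rw [sum_const, (mem_powersetCard.1 hT).2]
  rw [sum_congr rfl hcard, sum_sigma', sum_sigma']
  refine sum_nbij' (fun p => ⟨insert p.1 p.2, p.1⟩) (fun q => ⟨q.2, q.1.erase q.2⟩) ?_ ?_ ?_ ?_ ?_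
  · rintro ⟨i, S⟩ h
    simp only [mem_sigma, mem_powersetCard, subset_erase] at h ⊢
    obtain ⟨hi, ⟨hSt, hiS⟩, rfl⟩ := h
    exact ⟨⟨insert_subset hi hSt, card_insert_of_notMem hiS⟩, mem_insert_self _ _⟩
  · rintro ⟨T, i⟩ h
    simp only [mem_sigma, mem_powersetCard, subset_erase] at h ⊢
    obtain ⟨⟨hTt, hT⟩, hiT⟩ := h
    exact ⟨hTt hiT, ⟨(erase_subset _ _).trans hTt, notMem_erase _ _⟩, by
      rw [card_erase_of_mem hiT, hT, Nat.add_sub_cancel]⟩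
  · rintro ⟨i, S⟩ h
    simp only [mem_sigma, mem_powersetCard, subset_erase] at h
    simp [erase_insert h.2.1.2]
  · rintro ⟨T, i⟩ h
    simp only [mem_sigma] at h
    simp [insert_erase h.2]
  · rintro ⟨i, S⟩ h
    simp only [mem_sigma, mem_powersetCard, subset_erase] at h
    rw [prod_insert h.2.1.2]

end CommSemiring

variable [CommRing R] [LinearOrder R] [IsStrictOrderedRing R] {t : Finset ι} {c : ι → R}

omit [DecidableEq ι] in
theorem esymm_nonneg (hc : ∀ i ∈ t, 0 ≤ c i) (k : ℕ) : 0 ≤ t.esymm c k :=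
  sum_nonneg fun _ hS => prod_nonneg fun i hi => hc i ((mem_powersetCard.1 hS).1 hi)

theorem antivaryOn_esymm_erase (hc : ∀ i ∈ t, 0 ≤ c i) (k : ℕ) :
    AntivaryOn c (fun i => (t.erase i).esymm c k) t := by
  intro i hi j hj hlt
  by_contra! hcij
  obtain _ | k := k
  · simp [esymm] at hlt
  have hij : i ≠ j := by rintro rfl; exact hlt.false
  have hi' : t.erase i = insert j ((t.erase i).erase j) :=
    (insert_erase (mem_erase.2 ⟨hij.symm, hj⟩)).symm
  have hj' : t.erase j = insert i ((t.erase i).erase j) := by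
    rw [erase_right_comm, insert_erase (mem_erase.2 ⟨hij, hi⟩)]
  have hiu : i ∉ (t.erase i).erase j := fun h => (mem_erase.1 (mem_of_mem_erase h)).1 rfl
  have hu : 0 ≤ ((t.erase i).erase j).esymm c k :=
    esymm_nonneg (fun l hl => hc l (mem_of_mem_erase (mem_of_mem_erase hl))) k
  simp only at hlt
  rw [hi', hj', esymm_insert_succ (notMem_erase j _), esymm_insert_succ hiu] at hlt
  nlinarith

/-- **Maclaurin's inequality** `e_k / C(m, k) ≤ (e_1 / m) ^ k`, with the denominators cleared. -/
theorem pow_card_mul_esymm_le (hc : ∀ i ∈ t, 0 ≤ c i) (k : ℕ) :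
    (#t : R) ^ k * t.esymm c k ≤ (#t).choose k * (∑ i ∈ t, c i) ^ k := by
  induction k with
  | zero => simp [esymm]
  | succ k ih =>
    have hchebyshev := (antivaryOn_esymm_erase hc k).card_mul_sum_le_sum_mul_sum
    rw [sum_mul_esymm_erase, sum_esymm_erase, nsmul_eq_mul, nsmul_eq_mul] at hchebyshev
    have hchoose : ((#t - k : ℕ) : R) * (#t).choose k = (k + 1 : ℕ) * (#t).choose (k + 1) := by
      rw [mul_comm, ← Nat.cast_mul, ← Nat.choose_succ_right_eq, mul_comm, Nat.cast_mul]
    have hsum := sum_nonneg hc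
    refine le_of_mul_le_mul_left ?_ (by positivity : (0 : R) < (k + 1 : ℕ))
    calc ((k + 1 : ℕ) : R) * (#t ^ (k + 1) * t.esymm c (k + 1))
        = #t ^ k * (#t * ((k + 1 : ℕ) * t.esymm c (k + 1))) := by ring
      _ ≤ #t ^ k * ((∑ i ∈ t, c i) * ((#t - k : ℕ) * t.esymm c k)) := by gcongr
      _ = (∑ i ∈ t, c i) * (#t - k : ℕ) * (#t ^ k * t.esymm c k) := by ring
      _ ≤ (∑ i ∈ t, c i) * (#t - k : ℕ) * ((#t).choose k * (∑ i ∈ t, c i) ^ k) := by gcongr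
      _ = ((k + 1 : ℕ) : R) * ((#t).choose (k + 1) * (∑ i ∈ t, c i) ^ (k + 1)) := by
        linear_combination (∑ i ∈ t, c i) ^ (k + 1) * hchoose

end Finset

def Equiv.Perm.subtypeIffEquivProd {α : Type*} (p q : α → Prop) [DecidablePred p]
    [DecidablePred q] :
    {π : Perm α // ∀ x, p x ↔ q (π x)} ≃
      ({x // p x} ≃ {x // q x}) × ({x // ¬p x} ≃ {x // ¬q x}) where
  toFun π := (π.1.subtypeEquiv π.2, π.1.subtypeEquiv fun x => not_congr (π.2 x))
  invFun ef := ⟨Equiv.subtypeCongr ef.1 ef.2, fun x => by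
    by_cases hx : p x
    · simp [Equiv.subtypeCongr, sumCompl_symm_apply_of_pos hx, (ef.1 ⟨x, hx⟩).2, hx]
    · simp [Equiv.subtypeCongr, sumCompl_symm_apply_of_neg hx, (ef.2 ⟨x, hx⟩).2, hx]⟩
  left_inv π := by
    ext x
    by_cases hx : p x
    · simp [Equiv.subtypeCongr, sumCompl_symm_apply_of_pos hx]
    · simp [Equiv.subtypeCongr, sumCompl_symm_apply_of_neg hx]
  right_inv ef := by
    ext ⟨x, hx⟩
    · simp [Equiv.subtypeCongr, sumCompl_symm_apply_of_pos hx]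
    · simp [Equiv.subtypeCongr, sumCompl_symm_apply_of_neg hx]

theorem Equiv.Perm.natCard_subtype_iff {α : Type*} [Finite α] (p q : α → Prop)
    [DecidablePred p] [DecidablePred q] (h : Nat.card {x // p x} = Nat.card {x // q x}) :
    Nat.card {π : Perm α // ∀ x, p x ↔ q (π x)} =
      (Nat.card {x // p x}).factorial * (Nat.card α - Nat.card {x // p x}).factorial := by
  cases nonempty_fintype α
  have hc : Nat.card {x // ¬p x} = Nat.card α - Nat.card {x // p x} := by
    simp only [Nat.card_eq_fintype_card, Fintype.card_subtype_compl]
  have hc' : Nat.card {x // ¬q x} = Nat.card α - Nat.card {x // p x} := by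
    simp only [h, Nat.card_eq_fintype_card, Fintype.card_subtype_compl]
  obtain ⟨e⟩ := Finite.card_eq.1 h
  obtain ⟨e'⟩ := Finite.card_eq.1 (hc.trans hc'.symm)
  rw [Nat.card_congr (subtypeIffEquivProd p q), Nat.card_prod, ← hc, ← Nat.card_perm,
    ← Nat.card_perm, Nat.card_congr (equivCongr (.refl _) e.symm),
    Nat.card_congr (equivCongr (.refl _) e'.symm)]

section Sample

variable {N n : ℕ}

def sample (n : ℕ) (π : Perm (Fin N)) : Finset (Fin N) := {i | (π i : ℕ) < n}

theorem card_sample (hn : n ≤ N) (π : Perm (Fin N)) : #(sample n π) = n := by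
  rw [sample, ← Fintype.card_subtype]
  exact (Fintype.card_congr (π.subtypeEquiv fun _ => Iff.rfl)).trans (Fintype.card_fin_lt_of_le hn)

theorem card_filter_sample_eq (hn : n ≤ N) {S : Finset (Fin N)} (hS : #S = n) :
    #{π : Perm (Fin N) | sample n π = S} = n.factorial * (N - n).factorial := by
  have hS' : Nat.card {i // i ∈ S} = n := by rw [Nat.card_eq_fintype_card, Fintype.card_coe, hS]
  have hn' : Nat.card {k : Fin N // (k : ℕ) < n} = n := by
    rw [Nat.card_eq_fintype_card, Fintype.card_fin_lt_of_le hn]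
  rw [← Fintype.card_subtype, ← Nat.card_eq_fintype_card,
    Nat.card_congr (subtypeEquivRight fun π => by simp [sample, Finset.ext_iff, eq_comm] :
      {π : Perm (Fin N) // sample n π = S} ≃ {π : Perm (Fin N) // ∀ i, i ∈ S ↔ (π i : ℕ) < n}),
    Perm.natCard_subtype_iff _ _ (hS'.trans hn'.symm), hS', Nat.card_eq_fintype_card,
    Fintype.card_fin]

theorem sum_perm_sample {M : Type*} [AddCommMonoid M] (hn : n ≤ N) (g : Finset (Fin N) → M) :
    ∑ π : Perm (Fin N), g (sample n π) =
      (n.factorial * (N - n).factorial) • ∑ S ∈ univ.powersetCard n, g S := by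
  rw [← sum_fiberwise_of_maps_to (g := sample n) (t := univ.powersetCard n)
    fun π _ => mem_powersetCard_univ.2 (card_sample hn π), smul_sum]
  refine sum_congr rfl fun S hS => ?_
  rw [sum_congr rfl fun π hπ => congrArg g (mem_filter.1 hπ).2, sum_const,
    card_filter_sample_eq hn (mem_powersetCard_univ.1 hS)]

theorem sum_perm_prod_sample_le {R : Type*} [Field R] [LinearOrder R] [IsStrictOrderedRing R]
    (hn : n ≤ N) {c : Fin N → R} (hc : ∀ i, 0 ≤ c i) :
    ∑ π : Perm (Fin N), ∏ i ∈ sample n π, c i ≤ N.factorial * ((∑ i, c i) / N) ^ n := by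
  obtain rfl | hN := N.eq_zero_or_pos
  · simp [Nat.le_zero.1 hn, sample]
  have hmaclaurin := pow_card_mul_esymm_le (t := univ) (fun i _ => hc i) n
  rw [card_univ, Fintype.card_fin, mul_comm, ← le_div_iff₀ (by positivity), mul_div_assoc,
    ← div_pow] at hmaclaurin
  rw [sum_perm_sample hn (fun S => ∏ i ∈ S, c i), ← esymm, nsmul_eq_mul,
    ← Nat.choose_mul_factorial_mul_factorial hn]
  calc ((n.factorial * (N - n).factorial : ℕ) : R) * univ.esymm c n
      ≤ (n.factorial * (N - n).factorial : ℕ) * (N.choose n * ((∑ i, c i) / N) ^ n) := by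
        gcongr
    _ = _ := by push_cast; ring

theorem sum_exp_le_card_add_sum_add_sum_sq {ι : Type*} (s : Finset ι) {a : ι → ℝ}
    (ha : ∀ i ∈ s, |a i| ≤ 1) :
    ∑ i ∈ s, Real.exp (a i) ≤ #s + ∑ i ∈ s, a i + ∑ i ∈ s, a i ^ 2 := by
  rw [card_eq_sum_ones, Nat.cast_sum, Nat.cast_one, ← sum_add_distrib, ← sum_add_distrib]
  gcongr with i hi
  linarith [(abs_le.1 (Real.abs_exp_sub_one_sub_id_le (ha i hi))).2]

theorem sum_perm_exp_sum_sample_le (hn : n ≤ N) {a : Fin N → ℝ} (ha : ∑ i, a i = 0)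
    (ha1 : ∀ i, |a i| ≤ 1) :
    ∑ π : Perm (Fin N), Real.exp (∑ i ∈ sample n π, a i) ≤
      N.factorial * Real.exp (n * (∑ i, a i ^ 2) / N) := by
  have hmean : (∑ i, Real.exp (a i)) / N ≤ Real.exp ((∑ i, a i ^ 2) / N) := by
    obtain rfl | hN := N.eq_zero_or_pos
    · simp
    have hsum := sum_exp_le_card_add_sum_add_sum_sq univ fun i _ => ha1 i
    rw [ha, add_zero, card_univ, Fintype.card_fin] at hsum
    calc (∑ i, Real.exp (a i)) / N ≤ (N + ∑ i, a i ^ 2) / N := by gcongr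
      _ = (∑ i, a i ^ 2) / N + 1 := by field_simp; ring
      _ ≤ _ := Real.add_one_le_exp _
  simp_rw [Real.exp_sum]
  calc _ ≤ N.factorial * ((∑ i, Real.exp (a i)) / N) ^ n :=
        sum_perm_prod_sample_le hn fun i => (Real.exp_pos _).le
    _ ≤ N.factorial * Real.exp ((∑ i, a i ^ 2) / N) ^ n := by gcongr
    _ = _ := by rw [← Real.exp_nat_mul, mul_div_assoc]

theorem sum_exp_abs_le_two_mul_card {ι : Type*} (s : Finset ι) (X : ι → ℝ)
    (h : ∑ i ∈ s, Real.exp (X i) + ∑ i ∈ s, Real.exp (-X i) ≤ 5 / 2 * #s) :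
    ∑ i ∈ s, Real.exp |X i| ≤ 2 * #s := by
  have hsum : ∑ i ∈ s, Real.exp |X i| + ∑ i ∈ s, Real.exp (-|X i|) ≤ 5 / 2 * #s := by
    refine le_of_eq_of_le ?_ h
    rw [← sum_add_distrib, ← sum_add_distrib]
    refine sum_congr rfl fun i _ => ?_
    rcases abs_choice (X i) with hX | hX <;> rw [hX]
    rw [neg_neg, add_comm]
  have hcs : (#s : ℝ) ^ 2 ≤ (∑ i ∈ s, Real.exp |X i|) * ∑ i ∈ s, Real.exp (-|X i|) := by
    rw [card_eq_sum_ones, Nat.cast_sum, Nat.cast_one]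
    refine sum_sq_le_sum_mul_sum_of_sq_le_mul s (fun _ _ => (Real.exp_pos _).le)
      (fun _ _ => (Real.exp_pos _).le) fun i _ => ?_
    rw [← Real.exp_add, add_neg_cancel, Real.exp_zero, one_pow]
  have hcard : (#s : ℝ) ≤ ∑ i ∈ s, Real.exp |X i| := by
    rw [card_eq_sum_ones, Nat.cast_sum, Nat.cast_one]
    exact sum_le_sum fun i _ => Real.one_le_exp (abs_nonneg _)
  -- with `A` the sum to bound, the three facts give `(A - 2 #s) (A - #s / 2) ≤ 0` and `#s ≤ A`
  nlinarith

theorem sum_perm_exp_abs_sum_sample_le (hn : n ≤ N) {a : Fin N → ℝ} (ha : ∑ i, a i = 0)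
    (ha1 : ∀ i, |a i| ≤ 1) (hvar : n * (∑ i, a i ^ 2) / N ≤ 1 / 5) :
    ∑ π : Perm (Fin N), Real.exp |∑ i ∈ sample n π, a i| ≤ 2 * N.factorial := by
  have hexp : Real.exp (n * (∑ i, a i ^ 2) / N) ≤ 5 / 4 := by
    refine (Real.exp_bound_div_one_sub_of_interval (by positivity) (by linarith)).trans ?_
    rw [div_le_iff₀ (by linarith)]
    linarith
  have hpos := sum_perm_exp_sum_sample_le hn ha ha1
  have hneg := sum_perm_exp_sum_sample_le hn (a := fun i => -a i)
    (by rw [sum_neg_distrib, ha, neg_zero]) (fun i => (abs_neg (a i)).trans_le (ha1 i))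
  simp only [neg_sq, sum_neg_distrib] at hneg
  have hcard : (#(univ : Finset (Perm (Fin N))) : ℝ) = N.factorial := by
    rw [card_univ, Fintype.card_perm, Fintype.card_fin]
  rw [← hcard] at hpos hneg ⊢
  refine sum_exp_abs_le_two_mul_card _ _ ?_
  nlinarith [Nat.cast_nonneg (α := ℝ) #(univ : Finset (Perm (Fin N)))]

variable {𝒵 : Type*} (z : Fin N → 𝒵) (f : 𝒵 → ℝ)

theorem sum_sub_PN_eq_zero : ∑ i, (f (z i) - PN N z f) = 0 := by
  obtain rfl | hN := N.eq_zero_or_pos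
  · simp
  rw [sum_sub_distrib, sum_const, card_univ, Fintype.card_fin, nsmul_eq_mul, PN,
    mul_div_cancel₀ _ (by positivity), sub_self]

theorem sum_sq_sub_PN : ∑ i, (f (z i) - PN N z f) ^ 2 = N * L2PN N z f ^ 2 := by
  obtain rfl | hN := N.eq_zero_or_pos
  · simp
  rw [L2PN, Real.sq_sqrt (by positivity), mul_div_cancel₀ _ (by positivity)]

theorem sampleMean_sub_PN (hn : n ≠ 0) (hnN : n ≤ N) (π : Perm (Fin N)) :
    sampleMean N n z f π - PN N z f = (∑ i ∈ sample n π, (f (z i) - PN N z f)) / n := by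
  rw [sum_sub_distrib, sum_const, card_sample hnN, nsmul_eq_mul, sub_div,
    mul_div_cancel_left₀ _ (by positivity), sampleMean, sample, sum_filter]

theorem sum_perm_exp_abs_sampleMean_sub_PN_le (hn : 1 ≤ n) (hnN : n ≤ N) {C : ℝ} (hC : 0 < C)
    (hmax : ∀ i, |f (z i) - PN N z f| ≤ C * n) (hvar : 5 * L2PN N z f ^ 2 ≤ C ^ 2 * n) :
    ∑ π : Perm (Fin N), Real.exp (|sampleMean N n z f π - PN N z f| / C) ≤
      2 * N.factorial := by
  have hn' : (0 : ℝ) < n := by exact_mod_cast hn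
  have hN : (0 : ℝ) < N := by exact_mod_cast hn.trans hnN
  calc _ = ∑ π : Perm (Fin N),
        Real.exp |∑ i ∈ sample n π, (f (z i) - PN N z f) / (C * n)| := by
        simp_rw [sampleMean_sub_PN z f (by omega) hnN, ← sum_div, abs_div, div_div,
          abs_of_pos hn', mul_comm (n : ℝ), abs_of_pos (mul_pos hC hn')]
    _ ≤ 2 * N.factorial := by
      refine sum_perm_exp_abs_sum_sample_le hnN (by rw [← sum_div, sum_sub_PN_eq_zero, zero_div])
        (fun i => ?_) ?_
      · rw [abs_div, abs_of_pos (mul_pos hC hn'), div_le_one (mul_pos hC hn')]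
        exact hmax i
      · simp_rw [div_pow, ← sum_div, sum_sq_sub_PN]
        rw [show n * (N * L2PN N z f ^ 2 / (C * n) ^ 2) / N = L2PN N z f ^ 2 / (C ^ 2 * n) by
          field_simp, div_le_div_iff₀ (by positivity) (by norm_num)]
        linarith

end Sample

theorem bernstein_serfling_inequality_general
    {𝒵 : Type*} (N n : ℕ) (hn1 : 1 ≤ n) (hnN : n ≤ N)
    (z : Fin N → 𝒵) (f : 𝒵 → ℝ) :
    (∑ π : Equiv.Perm (Fin N),
        Real.exp (|sampleMean N n z f π - PN N z f| /
          ((24 * Real.sqrt 2 / (n : ℝ)) * (⨆ i : Fin N, |f (z i) - PN N z f|)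
            + Real.sqrt (72 / ((n : ℝ) * Real.log 2)) * L2PN N z f)))
      / (Nat.factorial N : ℝ) ≤ 2 := by
  set M := ⨆ i : Fin N, |f (z i) - PN N z f|
  set σ := L2PN N z f
  set C := 24 * Real.sqrt 2 / n * M + Real.sqrt (72 / (n * Real.log 2)) * σ
  have hM0 : 0 ≤ M := Real.iSup_nonneg fun i => abs_nonneg _
  have hσ0 : 0 ≤ σ := Real.sqrt_nonneg _
  obtain hC0 | hC := (show 0 ≤ C by positivity).eq_or_lt
  -- `x / 0 = 0`, so every summand is `exp 0 = 1`
  · simp [← hC0, Fintype.card_perm, Nat.factorial_ne_zero]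
  have hn : (0 : ℝ) < n := by exact_mod_cast hn1
  rw [div_le_iff₀ (by positivity)]
  refine sum_perm_exp_abs_sampleMean_sub_PN_le z f hn1 hnN hC (fun i => ?_) ?_
  · have hsqrt2 : 1 ≤ Real.sqrt 2 := Real.one_le_sqrt.2 one_le_two
    calc |f (z i) - PN N z f| ≤ M :=
          le_ciSup (Set.finite_range fun j => |f (z j) - PN N z f|).bddAbove i
      _ ≤ 24 * Real.sqrt 2 / n * M * n := by
        rw [div_mul_eq_mul_div, div_mul_cancel₀ _ hn.ne']
        nlinarith
      _ ≤ C * n := by gcongr; exact le_add_of_nonneg_right (by positivity)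
  · have hσC : 72 / (n * Real.log 2) * σ ^ 2 ≤ C ^ 2 := by
      rw [← Real.sq_sqrt (by positivity : 0 ≤ 72 / (n * Real.log 2)), ← mul_pow]
      gcongr
      exact le_add_of_nonneg_left (by positivity)
    have hlog2 := Real.log_two_lt_d9
    calc 5 * σ ^ 2 ≤ n * (72 / (n * Real.log 2) * σ ^ 2) := by
          rw [← mul_assoc, mul_div_assoc', mul_div_mul_left _ _ hn.ne', ← mul_div_right_comm,
            le_div_iff₀ (Real.log_pos one_lt_two)]
          nlinarith
      _ ≤ C ^ 2 * n := by rw [mul_comm]; gcongr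

/-- Bernstein–Serfling inequality: the sub-exponential (Orlicz ψ₁) norm of the
without-replacement sample mean deviation is at most
`C = (24√2/n)·max_i |f(z_i) − P_N f| + sqrt(72/(n·log 2))·‖f − P_N f‖_{L²(P_N)}`,
i.e. `E[exp(|𝔓_{π,n}f − P_Nf|/C)] ≤ 2`. -/
theorem bernstein_serfling_inequality
    {𝒵 : Type*} (N n : ℕ) (hn1 : 1 ≤ n) (hnN : n ≤ N)
    (z : Fin N → 𝒵) (f : 𝒵 → ℝ)
    (hnonconst : ∃ i j : Fin N, f (z i) ≠ f (z j)) :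
    (∑ π : Equiv.Perm (Fin N),
        Real.exp (|sampleMean N n z f π - PN N z f| /
          ((24 * Real.sqrt 2 / (n : ℝ)) * (⨆ i : Fin N, |f (z i) - PN N z f|)
            + Real.sqrt (72 / ((n : ℝ) * Real.log 2)) * L2PN N z f)))
      / (Nat.factorial N : ℝ) ≤ 2 :=
  bernstein_serfling_inequality_general N n hn1 hnN z f
end

section
/- Combinatorial matrix Hoeffding inequality: let {A_{i,j} : i,j ∈ [N]} be fixed symmetric real d×d matrices with ‖A_{i,j}‖_op ≤ M for all i, j (for some M > 0) and Σ_{i,j∈[N]} A_{i,j} = 0. Then for a uniform random permutation π of [N] and every t ≥ 0: P( ‖ Σ_{i=1}^N A_{i,π(i)} ‖_op ≥ t ) ≤ 2d · exp( −t² / (24 N M²) ). -/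
open Finset
open scoped Classical

/-- The ℓ²→ℓ² operator (spectral) norm of a real `d×d` matrix:
the supremum of the Euclidean norm of `A·v` over the Euclidean unit ball. -/
noncomputable def matOpNorm {d : ℕ} (A : Matrix (Fin d) (Fin d) ℝ) : ℝ :=
  ⨆ v : {v : Fin d → ℝ // ∑ i, (v i) ^ 2 ≤ 1}, Real.sqrt (∑ i, (A.mulVec v.1 i) ^ 2)

/-- Probability of an event under the uniform random permutation of `[N]`. -/
noncomputable def permProb (N : ℕ) (p : Equiv.Perm (Fin N) → Prop) : ℝ :=
  (∑ π : Equiv.Perm (Fin N), if p π then (1 : ℝ) else 0) / (Nat.factorial N : ℝ)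

/-!
Method of exchangeable pairs. Let `S_π = ∑ i, A i (π i)` and `m θ = ∑_π tr exp (θ S_π)`, so that
`m' θ = ∑_π tr (S_π exp (θ S_π))`. Replacing `π` by `π ∘ (i j)` subtracts from `S_π` the matrix
`D = A i (π i) + A j (π j) - A i (π j) - A j (π i)` and negates `D`, while `∑_{i,j} D = 2 N S_π`
because `∑ A = 0`. Averaging over the pairs `(π, π ∘ (i j))` and applying the mean value trace
inequality `|tr ((B - C) (e^{θB} - e^{θC}))| ≤ |θ|/2 tr ((B - C)² (e^{θB} + e^{θC}))` with
`‖D‖ ≤ 4M` gives `|m' θ| ≤ 4 N M² |θ| m θ`, hence `m θ ≤ N! d exp (2 N M² θ²)`. Markov's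
inequality for `e^{θ‖S‖} ≤ tr e^{θS} + tr e^{-θS}` at `θ = t / (4 N M²)` then bounds the
probability by `2 d exp (-t² / (8 N M²))`.
-/

open Matrix Equiv
open Real (exp)
open scoped RealInnerProductSpace Matrix.Norms.L2Operator

theorem Real.sinh_le_mul_cosh {x : ℝ} (hx : 0 ≤ x) : sinh x ≤ x * cosh x := by
  let g (y : ℝ) := y * cosh y - sinh y
  have hg (y : ℝ) : HasDerivAt g (y * sinh y) y :=
    (((hasDerivAt_id' y).fun_mul (hasDerivAt_cosh y)).fun_sub (hasDerivAt_sinh y)).congr_deriv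
      (by ring)
  have hmono : MonotoneOn g (Set.Ici 0) :=
    monotoneOn_of_deriv_nonneg (convex_Ici 0) (fun y _ => (hg y).continuousAt.continuousWithinAt)
      (fun y _ => (hg y).differentiableAt.differentiableWithinAt) fun y hy => by
        rw [interior_Ici] at hy
        rw [(hg y).deriv]
        exact mul_nonneg hy.out.le (sinh_nonneg_iff.2 hy.out.le)
  simpa [g] using hmono Set.self_mem_Ici hx hx

theorem Real.abs_sinh_le_abs_mul_cosh (x : ℝ) : |sinh x| ≤ |x| * cosh x := by
  simpa [abs_sinh, cosh_abs] using sinh_le_mul_cosh (abs_nonneg x)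

theorem Real.abs_exp_sub_exp_le (a b : ℝ) :
    |exp a - exp b| ≤ |a - b| * (exp a + exp b) / 2 := by
  obtain ⟨m, h, rfl, rfl⟩ : ∃ m h, a = m + h ∧ b = m - h :=
    ⟨(a + b) / 2, (a - b) / 2, by ring, by ring⟩
  rw [exp_add, exp_sub, add_sub_sub_cancel, ← two_mul, abs_mul, abs_two]
  calc |exp m * exp h - exp m / exp h| = 2 * exp m * |sinh h| := by
        rw [sinh_eq, exp_neg, div_eq_mul_inv (exp m), ← mul_sub, abs_mul,
          abs_of_pos (exp_pos m), abs_div, abs_two]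
        ring
    _ ≤ 2 * exp m * (|h| * cosh h) := by gcongr; exact abs_sinh_le_abs_mul_cosh h
    _ = 2 * |h| * (exp m * exp h + exp m / exp h) / 2 := by rw [cosh_eq, exp_neg]; ring

theorem le_mul_exp_sq_of_deriv_le {f f' : ℝ → ℝ} {c : ℝ} (hf : ∀ θ, HasDerivAt f (f' θ) θ)
    (hf' : ∀ θ, 0 < θ → f' θ ≤ c * θ * f θ) {θ : ℝ} (hθ : 0 ≤ θ) :
    f θ ≤ f 0 * exp (c * θ ^ 2 / 2) := by
  let φ (θ : ℝ) := f θ * exp (-(c * θ ^ 2 / 2))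
  have hφ (θ : ℝ) : HasDerivAt φ ((f' θ - c * θ * f θ) * exp (-(c * θ ^ 2 / 2))) θ := by
    have hq : HasDerivAt (fun θ : ℝ => -(c * θ ^ 2 / 2)) (-(c * θ)) θ :=
      (((hasDerivAt_pow 2 θ).const_mul c).div_const 2).fun_neg.congr_deriv (by push_cast; ring)
    exact ((hf θ).fun_mul hq.exp).congr_deriv (by ring)
  have hanti : AntitoneOn φ (Set.Ici 0) :=
    antitoneOn_of_deriv_nonpos (convex_Ici 0) (fun θ _ => (hφ θ).continuousAt.continuousWithinAt)
      (fun θ _ => (hφ θ).differentiableAt.differentiableWithinAt) fun θ hθ => by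
        rw [interior_Ici] at hθ
        rw [(hφ θ).deriv]
        exact mul_nonpos_of_nonpos_of_nonneg (sub_nonpos.2 (hf' θ hθ)) (Real.exp_pos _).le
  have hφθ : φ θ ≤ f 0 := by simpa [φ] using hanti Set.self_mem_Ici hθ hθ
  calc f θ = φ θ * exp (c * θ ^ 2 / 2) := by
        rw [mul_assoc, ← Real.exp_add, neg_add_cancel, Real.exp_zero, mul_one]
    _ ≤ f 0 * exp (c * θ ^ 2 / 2) := by gcongr

theorem le_mul_exp_sq_of_abs_deriv_le {f f' : ℝ → ℝ} {c : ℝ} (hf : ∀ θ, HasDerivAt f (f' θ) θ)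
    (hf' : ∀ θ, |f' θ| ≤ c * |θ| * f θ) (θ : ℝ) : f θ ≤ f 0 * exp (c * θ ^ 2 / 2) := by
  rcases le_total 0 θ with hθ | hθ
  · refine le_mul_exp_sq_of_deriv_le hf (fun θ hθ => ?_) hθ
    simpa [abs_of_pos hθ] using (le_abs_self _).trans (hf' θ)
  · have hneg (θ : ℝ) : HasDerivAt (fun θ => f (-θ)) (-f' (-θ)) θ :=
      ((hf (-θ)).comp θ (hasDerivAt_neg θ)).congr_deriv (by ring)
    have := le_mul_exp_sq_of_deriv_le (c := c) hneg (fun θ hθ => ?_) (neg_nonneg.2 hθ)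
    · simpa using this
    · simpa [abs_of_pos hθ] using (neg_le_abs _).trans (hf' (-θ))

variable {n : Type*} [Fintype n] [DecidableEq n]

namespace Matrix.IsHermitian

variable {S : Matrix n n ℝ}

theorem toEuclideanCLM_eigenvectorBasis (hS : S.IsHermitian) (k : n) :
    toEuclideanCLM (𝕜 := ℝ) S (hS.eigenvectorBasis k) = hS.eigenvalues k • hS.eigenvectorBasis k :=
  WithLp.ofLp_injective _ (by simpa using hS.mulVec_eigenvectorBasis k)

theorem inner_eigenvectorBasis_sub_apply {B C : Matrix n n ℝ} (hB : B.IsHermitian)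
    (hC : C.IsHermitian) (k l : n) :
    ⟪hC.eigenvectorBasis l, toEuclideanCLM (𝕜 := ℝ) (B - C) (hB.eigenvectorBasis k)⟫ =
      (hB.eigenvalues k - hC.eigenvalues l) * ⟪hC.eigenvectorBasis l, hB.eigenvectorBasis k⟫ := by
  have hCsymm := isSymmetric_toEuclideanLin_iff.2 hC
  rw [map_sub, _root_.sub_apply, inner_sub_right, hB.toEuclideanCLM_eigenvectorBasis,
    ← ContinuousLinearMap.coe_coe, coe_toEuclideanCLM_eq_toEuclideanLin, ← hCsymm,
    ← coe_toEuclideanCLM_eq_toEuclideanLin, ContinuousLinearMap.coe_coe,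
    hC.toEuclideanCLM_eigenvectorBasis, real_inner_smul_left, real_inner_smul_right]
  ring

theorem exists_l2_opNorm_eq_abs_eigenvalue [Nonempty n] (hS : S.IsHermitian) :
    ∃ k, ‖S‖ = |hS.eigenvalues k| := by
  have hT : IsSelfAdjoint (toEuclideanCLM (𝕜 := ℝ) (n := n) S) := hS.isSelfAdjoint.map _
  have hsp : spectrum ℝ (toEuclideanCLM (𝕜 := ℝ) (n := n) S) = Set.range hS.eigenvalues := by
    rw [AlgEquiv.spectrum_eq (toEuclideanCLM (𝕜 := ℝ) (n := n)) S,
      hS.spectrum_real_eq_range_eigenvalues]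
  obtain ⟨x, hx, hnorm⟩ :=
    spectrum.exists_nnnorm_eq_spectralRadius_of_nonempty (hsp ▸ Set.range_nonempty _)
  rw [ContinuousLinearMap.spectralRadius_eq_nnnorm _ hT] at hnorm
  obtain ⟨k, rfl⟩ := hsp ▸ hx
  exact ⟨k, by simpa [← NNReal.coe_inj, l2_opNorm_toEuclideanCLM] using hnorm.symm⟩

end Matrix.IsHermitian

/-! The three spectral sums below are `tr exp (θ S)`, `tr (Δ exp (θ S))` and `tr (Δᵀ Δ exp (θ S))`,
written in an orthonormal eigenbasis of `S`; they are set to `0` when `S` is not symmetric. -/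

noncomputable def traceExp (θ : ℝ) (S : Matrix n n ℝ) : ℝ :=
  if hS : S.IsHermitian then ∑ k, exp (θ * hS.eigenvalues k) else 0

noncomputable def traceMulExp (θ : ℝ) (S Δ : Matrix n n ℝ) : ℝ :=
  if hS : S.IsHermitian then
    ∑ k, exp (θ * hS.eigenvalues k) *
      ⟪hS.eigenvectorBasis k, toEuclideanCLM (𝕜 := ℝ) Δ (hS.eigenvectorBasis k)⟫
  else 0

noncomputable def traceSqMulExp (θ : ℝ) (S Δ : Matrix n n ℝ) : ℝ :=
  if hS : S.IsHermitian then
    ∑ k, exp (θ * hS.eigenvalues k) * ‖toEuclideanCLM (𝕜 := ℝ) Δ (hS.eigenvectorBasis k)‖ ^ 2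
  else 0

variable {S : Matrix n n ℝ}

theorem traceExp_nonneg (θ : ℝ) (S : Matrix n n ℝ) : 0 ≤ traceExp θ S := by
  unfold traceExp
  split_ifs
  exacts [sum_nonneg fun k _ => (Real.exp_pos _).le, le_rfl]

theorem traceExp_zero (hS : S.IsHermitian) : traceExp 0 S = Fintype.card n := by
  rw [traceExp, dif_pos hS]
  simp

theorem exp_mul_eigenvalue_le_traceExp (hS : S.IsHermitian) (θ : ℝ) (k : n) :
    exp (θ * hS.eigenvalues k) ≤ traceExp θ S := by
  rw [traceExp, dif_pos hS]
  exact single_le_sum (f := fun k => exp (θ * hS.eigenvalues k))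
    (fun k _ => (Real.exp_pos _).le) (mem_univ k)

theorem hasDerivAt_traceExp (hS : S.IsHermitian) (θ : ℝ) :
    HasDerivAt (traceExp · S) (traceMulExp θ S S) θ := by
  have hself (k : n) :
      ⟪hS.eigenvectorBasis k, toEuclideanCLM (𝕜 := ℝ) S (hS.eigenvectorBasis k)⟫ =
        hS.eigenvalues k := by
    simp [hS.toEuclideanCLM_eigenvectorBasis, real_inner_smul_right]
  simp only [traceExp, traceMulExp, dif_pos hS, hself]
  refine HasDerivAt.fun_sum fun k _ => ?_
  simpa [mul_comm] using ((hasDerivAt_id θ).mul_const (hS.eigenvalues k)).exp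

theorem traceMulExp_sum {ι : Type*} (θ : ℝ) (S : Matrix n n ℝ) (s : Finset ι)
    (Δ : ι → Matrix n n ℝ) :
    traceMulExp θ S (∑ i ∈ s, Δ i) = ∑ i ∈ s, traceMulExp θ S (Δ i) := by
  unfold traceMulExp
  split_ifs
  · rw [sum_comm]
    simp [inner_sum, mul_sum]
  · simp

theorem traceMulExp_smul (θ : ℝ) (S : Matrix n n ℝ) (c : ℝ) (Δ : Matrix n n ℝ) :
    traceMulExp θ S (c • Δ) = c * traceMulExp θ S Δ := by
  unfold traceMulExp
  split_ifs
  · simp [real_inner_smul_right, mul_sum, mul_left_comm]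
  · simp

theorem traceMulExp_neg (θ : ℝ) (S Δ : Matrix n n ℝ) :
    traceMulExp θ S (-Δ) = -traceMulExp θ S Δ := by
  simpa using traceMulExp_smul θ S (-1) Δ

theorem traceSqMulExp_neg (θ : ℝ) (S Δ : Matrix n n ℝ) :
    traceSqMulExp θ S (-Δ) = traceSqMulExp θ S Δ := by
  simp [traceSqMulExp]

theorem traceSqMulExp_le (hS : S.IsHermitian) (θ : ℝ) (Δ : Matrix n n ℝ) :
    traceSqMulExp θ S Δ ≤ ‖Δ‖ ^ 2 * traceExp θ S := by
  rw [traceSqMulExp, traceExp, dif_pos hS, dif_pos hS, mul_sum]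
  refine sum_le_sum fun k _ => ?_
  have hk : ‖toEuclideanCLM (𝕜 := ℝ) Δ (hS.eigenvectorBasis k)‖ ≤ ‖Δ‖ :=
    ((toEuclideanCLM (𝕜 := ℝ) Δ).le_of_opNorm_le_of_le le_rfl
      (hS.eigenvectorBasis.orthonormal.1 k).le).trans_eq (mul_one _)
  rw [mul_comm]
  gcongr

theorem traceMulExp_sub_eq_sum_left {B C : Matrix n n ℝ} (hB : B.IsHermitian)
    (hC : C.IsHermitian) (θ : ℝ) :
    traceMulExp θ B (B - C) = ∑ k, ∑ l, exp (θ * hB.eigenvalues k) *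
      ((hB.eigenvalues k - hC.eigenvalues l) *
        ⟪hC.eigenvectorBasis l, hB.eigenvectorBasis k⟫ ^ 2) := by
  rw [traceMulExp, dif_pos hB]
  refine sum_congr rfl fun k _ => ?_
  rw [← hC.eigenvectorBasis.sum_inner_mul_inner, mul_sum]
  refine sum_congr rfl fun l _ => ?_
  rw [hB.inner_eigenvectorBasis_sub_apply hC, real_inner_comm]
  ring

theorem traceMulExp_sub_eq_sum_right {B C : Matrix n n ℝ} (hB : B.IsHermitian)
    (hC : C.IsHermitian) (θ : ℝ) :
    traceMulExp θ C (B - C) = ∑ k, ∑ l, exp (θ * hC.eigenvalues l) *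
      ((hB.eigenvalues k - hC.eigenvalues l) *
        ⟪hC.eigenvectorBasis l, hB.eigenvectorBasis k⟫ ^ 2) := by
  rw [← neg_sub C B, traceMulExp_neg, traceMulExp_sub_eq_sum_left hC hB, sum_comm,
    ← sum_neg_distrib]
  refine sum_congr rfl fun k _ => ?_
  rw [← sum_neg_distrib]
  refine sum_congr rfl fun l _ => ?_
  rw [real_inner_comm]
  ring

theorem traceSqMulExp_sub_eq_sum_left {B C : Matrix n n ℝ} (hB : B.IsHermitian)
    (hC : C.IsHermitian) (θ : ℝ) :
    traceSqMulExp θ B (B - C) = ∑ k, ∑ l, exp (θ * hB.eigenvalues k) *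
      ((hB.eigenvalues k - hC.eigenvalues l) ^ 2 *
        ⟪hC.eigenvectorBasis l, hB.eigenvectorBasis k⟫ ^ 2) := by
  rw [traceSqMulExp, dif_pos hB]
  refine sum_congr rfl fun k _ => ?_
  rw [← hC.eigenvectorBasis.sum_sq_inner_right, mul_sum]
  refine sum_congr rfl fun l _ => ?_
  rw [hB.inner_eigenvectorBasis_sub_apply hC]
  ring

theorem traceSqMulExp_sub_eq_sum_right {B C : Matrix n n ℝ} (hB : B.IsHermitian)
    (hC : C.IsHermitian) (θ : ℝ) :
    traceSqMulExp θ C (B - C) = ∑ k, ∑ l, exp (θ * hC.eigenvalues l) *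
      ((hB.eigenvalues k - hC.eigenvalues l) ^ 2 *
        ⟪hC.eigenvectorBasis l, hB.eigenvectorBasis k⟫ ^ 2) := by
  rw [← neg_sub C B, traceSqMulExp_neg, traceSqMulExp_sub_eq_sum_left hC hB, sum_comm]
  refine sum_congr rfl fun k _ => sum_congr rfl fun l _ => ?_
  rw [real_inner_comm]
  ring

theorem abs_traceMulExp_sub_le {B C : Matrix n n ℝ} (hB : B.IsHermitian) (hC : C.IsHermitian)
    (θ : ℝ) :
    |traceMulExp θ B (B - C) - traceMulExp θ C (B - C)| ≤
      |θ| / 2 * (traceSqMulExp θ B (B - C) + traceSqMulExp θ C (B - C)) := by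
  rw [traceMulExp_sub_eq_sum_left hB hC, traceMulExp_sub_eq_sum_right hB hC,
    traceSqMulExp_sub_eq_sum_left hB hC, traceSqMulExp_sub_eq_sum_right hB hC,
    ← sum_sub_distrib, ← sum_add_distrib, mul_sum]
  refine (abs_sum_le_sum_abs _ _).trans (sum_le_sum fun k _ => ?_)
  rw [← sum_sub_distrib, ← sum_add_distrib, mul_sum]
  refine (abs_sum_le_sum_abs _ _).trans (sum_le_sum fun l _ => ?_)
  set x := hB.eigenvalues k - hC.eigenvalues l
  set c := ⟪hC.eigenvectorBasis l, hB.eigenvectorBasis k⟫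
  have hexp := Real.abs_exp_sub_exp_le (θ * hB.eigenvalues k) (θ * hC.eigenvalues l)
  rw [← mul_sub, abs_mul] at hexp
  calc _ = |exp (θ * hB.eigenvalues k) - exp (θ * hC.eigenvalues l)| * (|x| * c ^ 2) := by
        rw [← sub_mul, abs_mul, abs_mul, abs_sq]
    _ ≤ |θ| * |x| * (exp (θ * hB.eigenvalues k) + exp (θ * hC.eigenvalues l)) / 2 *
          (|x| * c ^ 2) := by
        gcongr
    _ = _ := by
        rw [← sq_abs x]
        ring

theorem abs_sum_traceMulExp_le_of_exchange {α : Type*} [Fintype α] (σ : α ≃ α)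
    {S Δ : α → Matrix n n ℝ} (hS : ∀ a, (S a).IsHermitian) (hSσ : ∀ a, S (σ a) = S a - Δ a)
    (hΔσ : ∀ a, Δ (σ a) = -Δ a) (θ : ℝ) :
    |∑ a, traceMulExp θ (S a) (Δ a)| ≤ |θ| / 2 * ∑ a, traceSqMulExp θ (S a) (Δ a) := by
  have hT : ∑ a, traceMulExp θ (S a) (Δ a) = -∑ a, traceMulExp θ (S a - Δ a) (Δ a) := by
    rw [← σ.sum_comp (fun a => traceMulExp θ (S a) (Δ a)), ← sum_neg_distrib]
    simp only [hSσ, hΔσ, traceMulExp_neg]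
  have hQ : ∑ a, traceSqMulExp θ (S a - Δ a) (Δ a) = ∑ a, traceSqMulExp θ (S a) (Δ a) := by
    rw [← σ.sum_comp (fun a => traceSqMulExp θ (S a) (Δ a))]
    simp only [hSσ, hΔσ, traceSqMulExp_neg]
  have hpair (a : α) := sub_sub_cancel (S a) (Δ a) ▸
    abs_traceMulExp_sub_le (hS a) (hSσ a ▸ hS (σ a)) θ
  calc |∑ a, traceMulExp θ (S a) (Δ a)|
      = |∑ a, (traceMulExp θ (S a) (Δ a) - traceMulExp θ (S a - Δ a) (Δ a))| / 2 := by
        rw [sum_sub_distrib, hT, ← neg_add', ← two_mul, abs_neg, abs_neg, abs_mul, abs_two]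
        ring
    _ ≤ (∑ a, |θ| / 2 *
          (traceSqMulExp θ (S a) (Δ a) + traceSqMulExp θ (S a - Δ a) (Δ a))) / 2 := by
        gcongr
        exact (abs_sum_le_sum_abs _ _).trans (sum_le_sum fun a _ => hpair a)
    _ = |θ| / 2 * ∑ a, traceSqMulExp θ (S a) (Δ a) := by
        rw [← mul_sum, sum_add_distrib, hQ]
        ring

theorem Matrix.IsHermitian.exp_mul_l2_opNorm_le [Nonempty n] (hS : S.IsHermitian) (θ : ℝ) :
    Real.exp (θ * ‖S‖) ≤ traceExp θ S + traceExp (-θ) S := by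
  obtain ⟨k, hk⟩ := hS.exists_l2_opNorm_eq_abs_eigenvalue
  have hpos := exp_mul_eigenvalue_le_traceExp hS θ k
  have hneg := exp_mul_eigenvalue_le_traceExp hS (-θ) k
  rcases abs_cases (hS.eigenvalues k) with ⟨h, -⟩ | ⟨h, -⟩ <;> rw [hk, h]
  · linarith [traceExp_nonneg (-θ) S]
  · rw [mul_neg, ← neg_mul]
    linarith [traceExp_nonneg θ S]

theorem sum_indicator_le_exp_mul_sum_traceExp {α : Type*} [Fintype α] [Nonempty n]
    {S : α → Matrix n n ℝ} (hS : ∀ a, (S a).IsHermitian) {θ : ℝ} (hθ : 0 ≤ θ) (t : ℝ) :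
    (∑ a, if t ≤ ‖S a‖ then (1 : ℝ) else 0) ≤
      exp (-(θ * t)) * ∑ a, (traceExp θ (S a) + traceExp (-θ) (S a)) := by
  rw [mul_sum]
  refine sum_le_sum fun a _ => ?_
  split_ifs with ht
  · calc (1 : ℝ) = exp (-(θ * t)) * exp (θ * t) := by
          rw [← Real.exp_add, neg_add_cancel, Real.exp_zero]
      _ ≤ exp (-(θ * t)) * exp (θ * ‖S a‖) := by gcongr
      _ ≤ _ := by gcongr; exact (hS a).exp_mul_l2_opNorm_le θ
  · exact mul_nonneg (Real.exp_pos _).le (add_nonneg (traceExp_nonneg _ _) (traceExp_nonneg _ _))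

section PermSum

variable {ι R : Type*} [AddCommGroup R]

def swapDiff (A : ι → ι → R) (π : Perm ι) (i j : ι) : R :=
  A i (π i) + A j (π j) - A i (π j) - A j (π i)

theorem swapDiff_mul_swap [DecidableEq ι] (A : ι → ι → R) (π : Perm ι) (i j : ι) :
    swapDiff A (π * swap i j) i j = -swapDiff A π i j := by
  simp only [swapDiff, Perm.mul_apply, swap_apply_left, swap_apply_right]
  abel

theorem norm_swapDiff_le {E : Type*} [SeminormedAddCommGroup E] {A : ι → ι → E} {M : ℝ}
    (hM : ∀ i j, ‖A i j‖ ≤ M) (π : Perm ι) (i j : ι) : ‖swapDiff A π i j‖ ≤ 4 * M := by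
  rw [swapDiff]
  have := norm_sub_le (A i (π i) + A j (π j) - A i (π j)) (A j (π i))
  have := norm_sub_le (A i (π i) + A j (π j)) (A i (π j))
  have := norm_add_le (A i (π i)) (A j (π j))
  linarith [hM i (π i), hM j (π j), hM i (π j), hM j (π i)]

variable [Fintype ι]

def permSum (A : ι → ι → R) (π : Perm ι) : R := ∑ i, A i (π i)

theorem permSum_mul_swap [DecidableEq ι] (A : ι → ι → R) (π : Perm ι) (i j : ι) :
    permSum A (π * swap i j) = permSum A π - swapDiff A π i j := by
  rcases eq_or_ne i j with rfl | hij
  · rw [swap_self, ← Perm.one_def, mul_one, swapDiff]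
    abel
  have hdiff : permSum A (π * swap i j) - permSum A π =
      ∑ m ∈ {i, j}, (A m (π (swap i j m)) - A m (π m)) := by
    rw [permSum, permSum, ← sum_sub_distrib]
    refine (sum_subset (subset_univ _) fun m _ hm => ?_).symm
    simp only [mem_insert, mem_singleton, not_or] at hm
    simp [swap_apply_of_ne_of_ne hm.1 hm.2]
  rw [sum_pair hij, swap_apply_left, swap_apply_right] at hdiff
  rw [← sub_add_cancel (permSum A (π * swap i j)) (permSum A π), hdiff, swapDiff]
  abel

theorem sum_sum_swapDiff {A : ι → ι → R} (hA : ∑ i, ∑ j, A i j = 0) (π : Perm ι) :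
    ∑ i, ∑ j, swapDiff A π i j = (2 * Fintype.card ι) • permSum A π := by
  have hrow (i : ι) : ∑ j, A i (π j) = ∑ j, A i j := Equiv.sum_comp π (A i)
  simp only [swapDiff, sum_sub_distrib, sum_add_distrib, hrow]
  rw [sum_comm (f := fun i j => A j (π i))]
  simp [hrow, hA, permSum, two_mul, add_nsmul, smul_sum, sum_add_distrib]

end PermSum

theorem mul_traceMulExp_permSum {ι m : Type*} [Fintype ι] [Fintype m] [DecidableEq m]
    {A : ι → ι → Matrix m m ℝ} (hA : ∑ i, ∑ j, A i j = 0) (θ : ℝ) (S : Matrix m m ℝ)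
    (π : Perm ι) :
    2 * Fintype.card ι * traceMulExp θ S (permSum A π) =
      ∑ i, ∑ j, traceMulExp θ S (swapDiff A π i j) := by
  calc 2 * Fintype.card ι * traceMulExp θ S (permSum A π)
      = traceMulExp θ S (((2 * Fintype.card ι : ℕ) : ℝ) • permSum A π) := by
        rw [traceMulExp_smul]
        push_cast
        rfl
    _ = ∑ i, ∑ j, traceMulExp θ S (swapDiff A π i j) := by
        rw [Nat.cast_smul_eq_nsmul, ← sum_sum_swapDiff hA]
        simp only [traceMulExp_sum]

theorem isHermitian_permSum {ι m α : Type*} [Fintype ι] [AddCommGroup α] [StarAddMonoid α]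
    {A : ι → ι → Matrix m m α} (hA : ∀ i j, (A i j).IsHermitian) (π : Perm ι) :
    (permSum A π).IsHermitian :=
  isSelfAdjoint_sum _ fun i _ => hA i (π i)

section Permutations

variable {ι : Type*} [Fintype ι] [DecidableEq ι] {A : ι → ι → Matrix n n ℝ}

theorem abs_sum_traceMulExp_permSum_le [Nonempty ι] (hA : ∀ i j, (A i j).IsHermitian)
    (hsum : ∑ i, ∑ j, A i j = 0) {M : ℝ} (hM : ∀ i j, ‖A i j‖ ≤ M) (θ : ℝ) :
    |∑ π, traceMulExp θ (permSum A π) (permSum A π)| ≤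
      4 * Fintype.card ι * M ^ 2 * |θ| * ∑ π, traceExp θ (permSum A π) := by
  have hN : (0 : ℝ) < Fintype.card ι := Nat.cast_pos.2 Fintype.card_pos
  have hS := isHermitian_permSum hA
  set m := ∑ π, traceExp θ (permSum A π)
  have hpair (i j : ι) :
      |∑ π, traceMulExp θ (permSum A π) (swapDiff A π i j)| ≤ |θ| / 2 * (16 * M ^ 2 * m) := by
    refine (abs_sum_traceMulExp_le_of_exchange (Equiv.mulRight (swap i j)) hS
      (permSum_mul_swap A · i j) (swapDiff_mul_swap A · i j) θ).trans ?_
    gcongr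
    rw [mul_sum]
    refine sum_le_sum fun π _ => (traceSqMulExp_le (hS π) θ _).trans ?_
    refine mul_le_mul_of_nonneg_right ?_ (traceExp_nonneg θ _)
    calc ‖swapDiff A π i j‖ ^ 2 ≤ (4 * M) ^ 2 := by gcongr; exact norm_swapDiff_le hM π i j
      _ = 16 * M ^ 2 := by ring
  refine le_of_mul_le_mul_left ?_ (by positivity : (0 : ℝ) < 2 * Fintype.card ι)
  calc 2 * Fintype.card ι * |∑ π, traceMulExp θ (permSum A π) (permSum A π)|
      = |∑ i, ∑ j, ∑ π, traceMulExp θ (permSum A π) (swapDiff A π i j)| := by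
        rw [← abs_of_pos (by positivity : (0 : ℝ) < 2 * Fintype.card ι), ← abs_mul, mul_sum]
        simp only [mul_traceMulExp_permSum hsum]
        rw [sum_comm]
        exact congrArg _ (sum_congr rfl fun i _ => sum_comm)
    _ ≤ ∑ i : ι, ∑ j : ι, |θ| / 2 * (16 * M ^ 2 * m) :=
        (abs_sum_le_sum_abs _ _).trans (sum_le_sum fun i _ =>
          (abs_sum_le_sum_abs _ _).trans (sum_le_sum fun j _ => hpair i j))
    _ = 2 * Fintype.card ι * (4 * Fintype.card ι * M ^ 2 * |θ| * m) := by
        simp only [sum_const, card_univ, nsmul_eq_mul]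
        ring

theorem sum_traceExp_permSum_le [Nonempty ι] (hA : ∀ i j, (A i j).IsHermitian)
    (hsum : ∑ i, ∑ j, A i j = 0) {M : ℝ} (hM : ∀ i j, ‖A i j‖ ≤ M) (θ : ℝ) :
    ∑ π, traceExp θ (permSum A π) ≤
      (Fintype.card ι).factorial * Fintype.card n * exp (2 * Fintype.card ι * M ^ 2 * θ ^ 2) := by
  have hS := isHermitian_permSum hA
  have hderiv (θ : ℝ) : HasDerivAt (fun θ => ∑ π, traceExp θ (permSum A π))
      (∑ π, traceMulExp θ (permSum A π) (permSum A π)) θ :=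
    HasDerivAt.fun_sum fun π _ => hasDerivAt_traceExp (hS π) θ
  have h0 : ∑ π, traceExp 0 (permSum A π) = (Fintype.card ι).factorial * Fintype.card n := by
    simp [traceExp_zero (hS _), Fintype.card_perm]
  refine (le_mul_exp_sq_of_abs_deriv_le hderiv
    (abs_sum_traceMulExp_permSum_le hA hsum hM) θ).trans_eq ?_
  rw [h0]
  ring_nf

theorem sum_indicator_norm_permSum_le [Nonempty ι] [Nonempty n]
    (hA : ∀ i j, (A i j).IsHermitian) (hsum : ∑ i, ∑ j, A i j = 0) {M : ℝ}
    (hM : ∀ i j, ‖A i j‖ ≤ M) {θ : ℝ} (hθ : 0 ≤ θ) (t : ℝ) :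
    (∑ π, if t ≤ ‖permSum A π‖ then (1 : ℝ) else 0) ≤
      2 * (Fintype.card ι).factorial * Fintype.card n *
        exp (-(θ * t) + 2 * Fintype.card ι * M ^ 2 * θ ^ 2) := by
  refine (sum_indicator_le_exp_mul_sum_traceExp (isHermitian_permSum hA) hθ t).trans ?_
  have hpos := sum_traceExp_permSum_le hA hsum hM θ
  have hneg := sum_traceExp_permSum_le hA hsum hM (-θ)
  rw [neg_sq] at hneg
  calc exp (-(θ * t)) * ∑ π, (traceExp θ (permSum A π) + traceExp (-θ) (permSum A π))
      ≤ exp (-(θ * t)) * (2 * ((Fintype.card ι).factorial * Fintype.card n *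
          exp (2 * Fintype.card ι * M ^ 2 * θ ^ 2))) := by
        rw [sum_add_distrib]
        gcongr
        linarith
    _ = _ := by
        rw [Real.exp_add]
        ring

end Permutations

theorem matOpNorm_eq_l2_opNorm {d : ℕ} (A : Matrix (Fin d) (Fin d) ℝ) : matOpNorm A = ‖A‖ := by
  set B := {v : Fin d → ℝ // ∑ i, (v i) ^ 2 ≤ 1}
  have hnorm (v : B) : √(∑ i, (A *ᵥ v.1) i ^ 2) =
      ‖toEuclideanCLM (𝕜 := ℝ) A (WithLp.toLp 2 v.1)‖ := by
    simp [EuclideanSpace.norm_eq]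
  have hball (v : Fin d → ℝ) :
      ∑ i, v i ^ 2 ≤ 1 ↔ ‖(WithLp.toLp 2 v : EuclideanSpace ℝ (Fin d))‖ ≤ 1 := by
    simp [EuclideanSpace.norm_eq]
  have hle (v : B) : √(∑ i, (A *ᵥ v.1) i ^ 2) ≤ ‖A‖ := by
    rw [hnorm]
    exact ((toEuclideanCLM (𝕜 := ℝ) A).le_of_opNorm_le_of_le le_rfl
      ((hball v.1).1 v.2)).trans_eq (mul_one _)
  have hbdd : BddAbove (Set.range fun v : B => √(∑ i, (A *ᵥ v.1) i ^ 2)) :=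
    ⟨‖A‖, Set.forall_mem_range.2 hle⟩
  have : Nonempty B := ⟨⟨0, by simp⟩⟩
  refine le_antisymm (ciSup_le hle) (ContinuousLinearMap.opNorm_le_of_unit_norm
    ((Real.sqrt_nonneg _).trans (le_ciSup hbdd ⟨0, by simp⟩)) fun x hx => ?_)
  have hx' : ∑ i, x.ofLp i ^ 2 ≤ 1 := (hball _).2 (by simp [hx])
  exact (hnorm ⟨x.ofLp, hx'⟩).symm.trans_le (le_ciSup hbdd ⟨x.ofLp, hx'⟩)

/-- Combinatorial matrix Hoeffding inequality. -/
theorem combinatorial_matrix_hoeffding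
    (d N : ℕ) (hd : 1 ≤ d) (hN : 1 ≤ N)
    (A : Fin N → Fin N → Matrix (Fin d) (Fin d) ℝ)
    (hsymm : ∀ i j, (A i j).IsSymm)
    (M : ℝ) (hM : 0 < M)
    (hbd : ∀ i j, matOpNorm (A i j) ≤ M)
    (hsum : ∑ i, ∑ j, A i j = 0)
    (t : ℝ) (ht : 0 ≤ t) :
    permProb N (fun π => t ≤ matOpNorm (∑ i, A i (π i)))
      ≤ 2 * (d : ℝ) * Real.exp (-(t ^ 2) / (24 * (N : ℝ) * M ^ 2)) := by
  have : Nonempty (Fin d) := ⟨⟨0, hd⟩⟩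
  have : Nonempty (Fin N) := ⟨⟨0, hN⟩⟩
  have hA (i j : Fin N) : (A i j).IsHermitian := isHermitian_iff_isSymm.2 (hsymm i j)
  have hnorm (i j : Fin N) : ‖A i j‖ ≤ M := matOpNorm_eq_l2_opNorm (A i j) ▸ hbd i j
  have hNpos : (0 : ℝ) < N := by exact_mod_cast hN
  set θ := t / (4 * N * M ^ 2)
  have hexponent : -(θ * t) + 2 * N * M ^ 2 * θ ^ 2 ≤ -(t ^ 2) / (24 * N * M ^ 2) := by
    rw [show -(θ * t) + 2 * N * M ^ 2 * θ ^ 2 = -(t ^ 2) / (8 * N * M ^ 2) by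
      simp only [θ]; field_simp; ring, neg_div, neg_div, neg_le_neg_iff]
    exact div_le_div_of_nonneg_left (sq_nonneg t) (by positivity) (by gcongr; norm_num)
  have hmarkov := sum_indicator_norm_permSum_le hA hsum hnorm (θ := θ) (by positivity) t
  simp only [Fintype.card_fin] at hmarkov
  calc permProb N (fun π => t ≤ matOpNorm (∑ i, A i (π i)))
      = (∑ π, if t ≤ ‖permSum A π‖ then (1 : ℝ) else 0) / N.factorial := by
        simp only [permProb, matOpNorm_eq_l2_opNorm]
        congr!
    _ ≤ 2 * N.factorial * d * exp (-(θ * t) + 2 * N * M ^ 2 * θ ^ 2) / N.factorial := by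
        gcongr
    _ = 2 * d * exp (-(θ * t) + 2 * N * M ^ 2 * θ ^ 2) := by
        field_simp
    _ ≤ 2 * d * exp (-(t ^ 2) / (24 * N * M ^ 2)) := by
        gcongr
end
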